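/- arXiv:1703.01324 — 3 statements merged into one kernel-verified Lean document; each statement's English description precedes it below -/
import Mathlib

section
/- Every real root w > 1 of w^14 - 2w^12 + 2w^10 - 2w^8 + 2w^2 - 1 = 0 satisfies w^6 = w^2 + 1. -/
theorem stmt_3 (w : ℝ) (hw : 1 < w)
    (h : w^14 - 2*w^12 + 2*w^10 - 2*w^8 + 2*w^2 - 1 = 0) :
    w^6 = w^2 + 1 := by
  have hfac : (w^6 - w^2 - 1) * (w^8 - 2*w^6 + 3*w^4 - 3*w^2 + 1) = 0 := by
    nlinarith [h]
  have hpos : w^8 - 2*w^6 + 3*w^4 - 3*w^2 + 1 > 0 := by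
    nlinarith [sq_nonneg (w^2-1), sq_nonneg w, sq_nonneg (w^3-w), mul_pos (sub_pos.mpr hw) (sub_pos.mpr hw), sq_nonneg (w^4-w^2)]
  have := mul_eq_zero.mp hfac
  rcases this with h1 | h2
  · linarith
  · linarith
end

section
/- For all real w, e with 1 ≤ w < 2^(1/4) and 2^(-1/4) ≤ e ≤ 2^(1/4), the y-inequality fails strictly: e^4 w^2 + w^6 - e^2 w^4 - w^2 - e^2 < 0. -/
theorem stmt_12 (w e : ℝ) (hw1 : 1 ≤ w) (hw2 : w < (2:ℝ)^((1:ℝ)/4))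
    (he1 : (2:ℝ)^(-(1:ℝ)/4) ≤ e) (he2 : e ≤ (2:ℝ)^((1:ℝ)/4)) :
    e^4*w^2 + w^6 - e^2*w^4 - w^2 - e^2 < 0 := by
  have h1 : ((2:ℝ)^((1:ℝ)/4))^4 = 2 := by
    rw [← Real.rpow_natCast ((2:ℝ)^((1:ℝ)/4)) 4, ← Real.rpow_mul (by norm_num)]
    norm_num
  have h2 : ((2:ℝ)^(-(1:ℝ)/4))^4 = 1/2 := by
    rw [← Real.rpow_natCast ((2:ℝ)^(-(1:ℝ)/4)) 4, ← Real.rpow_mul (by norm_num)]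
    norm_num
  have hepos : (0:ℝ) < e := lt_of_lt_of_le (Real.rpow_pos_of_pos (by norm_num) _) he1
  have hw4 : w^4 < 2 := by
    calc w^4 < ((2:ℝ)^((1:ℝ)/4))^4 := by
          apply pow_lt_pow_left₀ hw2 (by linarith) (by norm_num)
      _ = 2 := h1
  have he4u : e^4 ≤ 2 := by
    calc e^4 ≤ ((2:ℝ)^((1:ℝ)/4))^4 := pow_le_pow_left₀ hepos.le he2 4
      _ = 2 := h1
  have he4l : (1:ℝ)/2 ≤ e^4 := by
    calc (1:ℝ)/2 = ((2:ℝ)^(-(1:ℝ)/4))^4 := h2.symm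
      _ ≤ e^4 := pow_le_pow_left₀ (Real.rpow_pos_of_pos (by norm_num) _).le he1 4
  set s : ℝ := Real.sqrt 2 with hsdef
  have hs : s^2 = 2 := Real.sq_sqrt (by norm_num)
  have hspos : 0 < s := Real.sqrt_pos.2 (by norm_num)
  have hws : w^2 < s := by nlinarith [sq_nonneg w, sq_nonneg (w^2 - s)]
  have heu : e^2 ≤ s := by nlinarith [sq_nonneg e, sq_nonneg (e^2 - s)]
  have hel : s/2 ≤ e^2 := by nlinarith [sq_nonneg e, sq_nonneg (e^2 + s/2)]
  have key : e^4*w^2 + w^6 - e^2*w^4 - w^2 - e^2 =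
      -((s-w^2)*(w^2+1)) - w^2*((s-e^2)*(e^2-s/2)) - (s-e^2)*((s-w^2)*(w^2-s/2))
        - w^2*(w^2-1)*(s-w^2) := by
    linear_combination (w^2 + e^2/2 - s/2) * hs
  rw [key]
  have hw2' : (1:ℝ) ≤ w^2 := by nlinarith
  have hs2 : s/2 < w^2 := by nlinarith
  have t1 : 0 ≤ w^2 * ((s - e^2) * (e^2 - s/2)) :=
    mul_nonneg (by positivity) (mul_nonneg (by linarith) (by linarith))
  have t2 : 0 ≤ (s - e^2) * ((s - w^2) * (w^2 - s/2)) :=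
    mul_nonneg (by linarith) (mul_nonneg (by linarith) (by linarith))
  have t3 : 0 < (s - w^2) * (w^2 + 1) := mul_pos (by linarith) (by positivity)
  have t4 : 0 ≤ w^2*(w^2-1)*(s-w^2) :=
    mul_nonneg (mul_nonneg (by positivity) (by linarith)) (by linarith)
  linarith
end

section
/- If w > 1 is real and satisfies both w^4 = w^2 + 1/w^2 - 2 cos θ and 1/w^8 = w^2 + 1/w^6 - (2/w^2) cos(π - 2θ) for some real θ, then w^14 - 2w^12 + 2w^10 - 2w^8 + 2w^2 - 1 = 0, and hence w^6 = w^2 + 1. -/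
/-!
Put `c = cos θ`. Since `cos (π - 2θ) = 1 - 2c²`, the two relations are polynomial in `w⁻¹` and `c`,
and the first one is linear in `c`; substituting it into the second eliminates `θ` and leaves the
degree-14 equation. That polynomial factors as
`(w⁶ - w² - 1) (w² - 1) (w⁶ - w⁴ + 2w² - 1)`, and for `w > 1` the last two factors are positive.
-/

lemma poly14_eq_zero_of_cusp_relations {K : Type*} [Field K] [NeZero (2 : K)] {w c : K}
    (hw : w ≠ 0)
    (h1 : w^4 = w^2 + 1/w^2 - 2 * c)
    (h2 : 1/w^8 = w^2 + 1/w^6 - (2/w^2) * (1 - 2 * c^2)) :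
    w^14 - 2*w^12 + 2*w^10 - 2*w^8 + 2*w^2 - 1 = 0 := by
  obtain rfl : c = (w^2 + 1/w^2 - w^4) / 2 :=
    eq_div_of_mul_eq two_ne_zero (by linear_combination h1)
  field_simp at h2
  linear_combination -h2

lemma poly14_factor {R : Type*} [CommRing R] (w : R) :
    w^14 - 2*w^12 + 2*w^10 - 2*w^8 + 2*w^2 - 1
      = (w^6 - w^2 - 1) * ((w^2 - 1) * (w^6 - w^4 + 2*w^2 - 1)) := by
  ring

lemma pow_six_eq_of_poly14_eq_zero {K : Type*} [Field K] [LinearOrder K] [IsStrictOrderedRing K]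
    {w : K} (hw : 1 < w) (h : w^14 - 2*w^12 + 2*w^10 - 2*w^8 + 2*w^2 - 1 = 0) :
    w^6 = w^2 + 1 := by
  have hw2 : 0 < w^2 - 1 := by nlinarith
  have hcofactor : 0 < (w^2 - 1) * (w^6 - w^4 + 2*w^2 - 1) :=
    mul_pos hw2 (by nlinarith [pow_pos (zero_lt_one.trans hw) 4])
  rw [poly14_factor] at h
  linear_combination (mul_eq_zero.mp h).resolve_right hcofactor.ne'

theorem stmt_14 (w θ : ℝ) (hw : 1 < w)
    (h1 : w^4 = w^2 + 1/w^2 - 2 * Real.cos θ)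
    (h2 : 1/w^8 = w^2 + 1/w^6 - (2/w^2) * Real.cos (Real.pi - 2*θ)) :
    w^14 - 2*w^12 + 2*w^10 - 2*w^8 + 2*w^2 - 1 = 0 ∧ w^6 = w^2 + 1 := by
  have hcos : Real.cos (Real.pi - 2*θ) = 1 - 2 * Real.cos θ ^ 2 := by
    rw [Real.cos_pi_sub, Real.cos_two_mul]; ring
  rw [hcos] at h2
  have hpoly := poly14_eq_zero_of_cusp_relations (by positivity) h1 h2
  exact ⟨hpoly, pow_six_eq_of_poly14_eq_zero hw hpoly⟩
end
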